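/- arXiv:2405.20589 — 2 statements merged into one kernel-verified Lean document; each statement's English description precedes it below -/
import Mathlib

section
/- With R₁ = T·p_min and R₂ ≤ min(S,T), if min(S,T) ≥ k², then the parameter reduction ratio r = p·R₂·((p/p_min)S + (p_min/p)Tk²)/(STk²) satisfies r ≤ p²/(k²p_min) + p_min. -/
/-- With `R₁ = T·p_min` and `R₂ ≤ min(S,T)`, if `min(S,T) ≥ k²` then the
parameter reduction ratio `r = p·R₂((p/p_min)S + (p_min/p)Tk²)/(STk²)` is at most
`p²/(k²p_min) + p_min`. -/
theorem reduction_ratio_bound (k R2 S T p pmin r : ℝ)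
    (hS : 0 < S) (hT : 0 < T) (hk : 0 < k)
    (hR2pos : 0 < R2) (hR2 : R2 ≤ min S T) (hmin : k ^ 2 ≤ min S T)
    (hpmin : 0 < pmin) (hpminp : pmin ≤ p) (hp1 : p ≤ 1)
    (hr : r = p * R2 * ((p / pmin) * S + (pmin / p) * T * k ^ 2) / (S * T * k ^ 2)) :
    r ≤ p ^ 2 / (k ^ 2 * pmin) + pmin := by
  have hp : 0 < p := lt_of_lt_of_le hpmin hpminp
  have hR2S : R2 ≤ S := hR2.trans (min_le_left _ _)
  have hR2T : R2 ≤ T := hR2.trans (min_le_right _ _)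
  have hk2 : 0 < k ^ 2 := by positivity
  have hreq : r = p ^ 2 * R2 / (pmin * T * k ^ 2) + pmin * R2 / S := by
    rw [hr]; field_simp
  rw [hreq]
  have h1 : p ^ 2 * R2 / (pmin * T * k ^ 2) ≤ p ^ 2 / (k ^ 2 * pmin) := by
    rw [div_le_div_iff₀ (by positivity) (by positivity)]
    nlinarith [mul_le_mul_of_nonneg_left hR2T (by positivity : (0:ℝ) ≤ p ^ 2 * k ^ 2 * pmin)]
  have h2 : pmin * R2 / S ≤ pmin := by
    rw [div_le_iff₀ hS]
    nlinarith
  linarith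
end

section
/- If the hyper-network loss is L_HN = (1/N) Σᵢ (1/2)‖h(φ)[i] - θᵢ'‖² where θᵢ' = h(φ₀)[i] - η·∂fᵢ/∂θᵢ evaluated at θᵢ = h(φ₀)[i], then the gradient of L_HN at φ = φ₀ equals (η/N) Σᵢ ∂(fᵢ ∘ h(·)[i])/∂φ evaluated at φ₀, i.e., η times the gradient of the averaged composite objective. -/
open Finset

/-- Hyper-network gradient identity: if each client performs one gradient step
of size `η` starting from the generated parameters `h φ₀ i`, then the gradient
of the hyper-network loss `L_HN(φ) = (1/N) Σᵢ (1/2)‖h(φ)[i] - θᵢ'‖²` at `φ₀`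
equals `η` times the gradient of the averaged composite objective
`(1/N) Σᵢ fᵢ(h(φ)[i])`. -/
theorem hypernetwork_gradient {mdim d N : ℕ} (hN : 0 < N)
    (h : EuclideanSpace ℝ (Fin mdim) → Fin N → EuclideanSpace ℝ (Fin d))
    (f : Fin N → EuclideanSpace ℝ (Fin d) → ℝ)
    (η : ℝ) (φ₀ : EuclideanSpace ℝ (Fin mdim))
    (Gf : Fin N → EuclideanSpace ℝ (Fin d))
    (hGf : ∀ i, HasGradientAt (f i) (Gf i) (h φ₀ i))
    (hh : ∀ i, DifferentiableAt ℝ (fun φ => h φ i) φ₀)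
    (Gc : Fin N → EuclideanSpace ℝ (Fin mdim))
    (hGc : ∀ i, HasGradientAt (fun φ => f i (h φ i)) (Gc i) φ₀)
    (θ' : Fin N → EuclideanSpace ℝ (Fin d))
    (hθ' : ∀ i, θ' i = h φ₀ i - η • Gf i) :
    HasGradientAt
      (fun φ => (1 / (N : ℝ)) * ∑ i, (1 / 2) * ‖h φ i - θ' i‖ ^ 2)
      (η • ((1 / (N : ℝ)) • ∑ i, Gc i)) φ₀ := by
  classical
  rw [hasGradientAt_iff_hasFDerivAt]
  set D : Fin N → (EuclideanSpace ℝ (Fin mdim) →L[ℝ] EuclideanSpace ℝ (Fin d)) :=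
    fun i => fderiv ℝ (fun φ => h φ i) φ₀ with hD
  have hDi : ∀ i, HasFDerivAt (fun φ => h φ i) (D i) φ₀ := fun i => (hh i).hasFDerivAt
  have hchain : ∀ i,
      ((InnerProductSpace.toDual ℝ (EuclideanSpace ℝ (Fin d)) (Gf i)).comp (D i))
      = (InnerProductSpace.toDual ℝ (EuclideanSpace ℝ (Fin mdim)) (Gc i)) := by
    intro i
    have h1 : HasFDerivAt (fun φ => f i (h φ i))
        ((InnerProductSpace.toDual ℝ (EuclideanSpace ℝ (Fin d)) (Gf i)).comp (D i)) φ₀ :=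
      (hasGradientAt_iff_hasFDerivAt.mp (hGf i)).comp φ₀ (hDi i)
    exact h1.unique (hasGradientAt_iff_hasFDerivAt.mp (hGc i))
  have hterm : ∀ i, HasFDerivAt (fun φ => (1 / 2 : ℝ) * ‖h φ i - θ' i‖ ^ 2)
      (η • (InnerProductSpace.toDual ℝ (EuclideanSpace ℝ (Fin mdim)) (Gc i))) φ₀ := by
    intro i
    have hsub : HasFDerivAt (fun φ => h φ i - θ' i) (D i) φ₀ := (hDi i).sub_const _
    have hin := (hsub.inner ℝ hsub).const_mul (1 / 2 : ℝ)
    simp only [real_inner_self_eq_norm_sq] at hin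
    have hmap : ((1 / 2 : ℝ) • (fderivInnerCLM ℝ
          (h φ₀ i - θ' i, h φ₀ i - θ' i)).comp ((D i).prod (D i)))
        = η • (InnerProductSpace.toDual ℝ (EuclideanSpace ℝ (Fin mdim)) (Gc i)) := by
      ext w
      have hc := congrFun (congrArg DFunLike.coe (hchain i)) w
      simp only [ContinuousLinearMap.coe_comp', Function.comp_apply,
        InnerProductSpace.toDual_apply_apply] at hc
      simp only [ContinuousLinearMap.coe_smul', Pi.smul_apply,
        ContinuousLinearMap.coe_comp', Function.comp_apply,
        ContinuousLinearMap.prod_apply, fderivInnerCLM_apply,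
        InnerProductSpace.toDual_apply_apply, smul_eq_mul, hθ' i, sub_sub_cancel]
      rw [inner_smul_right, inner_smul_left, RCLike.conj_to_real]
      show (1:ℝ)/2 * (η * (inner ℝ (Gf i) ((D i) w) : ℝ) + η * (inner ℝ ((D i) w) (Gf i) : ℝ))
        = η * (inner ℝ (Gc i) w : ℝ)
      have hc' : (inner ℝ ((D i) w) (Gf i) : ℝ) = inner ℝ (Gc i) w := by
        rw [real_inner_comm]; exact hc
      have hcL : (inner ℝ (Gf i) ((D i) w) : ℝ) = inner ℝ (Gc i) w := hc
      linear_combination (η/2) * hcL + (η/2) * hc'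
    rw [← hmap]
    exact hin
  have hsum := HasFDerivAt.sum (fun i (_ : i ∈ Finset.univ) => hterm i)
  have htot := hsum.const_mul (1 / (N : ℝ))
  have hmap2 : ((1 / (N : ℝ)) • ∑ i, η •
        (InnerProductSpace.toDual ℝ (EuclideanSpace ℝ (Fin mdim)) (Gc i)))
      = (InnerProductSpace.toDual ℝ (EuclideanSpace ℝ (Fin mdim)))
        (η • ((1 / (N : ℝ)) • ∑ i, Gc i)) := by
    simp only [map_smul, map_sum]
    rw [smul_comm η, ← Finset.smul_sum]
  rw [← hmap2]
  simpa only [Finset.sum_apply] using htot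
end
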